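/- arXiv:2303.17450 — 3 statements merged into one kernel-verified Lean document; each statement's English description precedes it below -/
import Mathlib

section
/- With the notation of the previous setup (αᵢ = ∂ᵢB_{∂∂}C_{∂a} − 2νᵢC_{∂a} + ∂ᵢB_{νa} in the A-module R with basis a₁,...,a₈), for all i,j ∈ {5,6,7,8} with i ≠ j one has ∂ᵢ αⱼ = −∂ⱼ αᵢ. -/
open scoped TensorProduct
open MvPolynomial

set_option synthInstance.maxHeartbeats 1000000
set_option maxHeartbeats 1000000

noncomputable section

variable (F : Type) [Field F] [CharZero F]

/-- The polynomial part `F[∂₁,…,∂₄]` (even variables). -/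
abbrev PolyPart := MvPolynomial (Fin 4) F

/-- The exterior (Grassmann) part `Λ(∂₅,…,∂₈)` on four odd generators. -/
abbrev ExtPart := ExteriorAlgebra F (Fin 4 → F)

/-- `A = F[∂₁,…,∂₄] ⊗ Λ(∂₅,…,∂₈)` (written with the exterior factor first). -/
abbrev AA := ExtPart F ⊗[F] PolyPart F

/-- The `i`-th odd generator of the exterior part. -/
def gen (i : Fin 4) : ExtPart F := ExteriorAlgebra.ι F (Pi.single i (1 : F))

/-- The generators `∂₁,…,∂₈` of `A` (0-based: `dv 0,…,dv 3` are the even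
generators `∂₁,…,∂₄`, and `dv 4,…,dv 7` are the odd generators `∂₅,…,∂₈`). -/
def dv (i : Fin 8) : AA F :=
  if h : (i : ℕ) < 4 then (1 : ExtPart F) ⊗ₜ[F] (X ⟨i, h⟩ : PolyPart F)
  else (gen F ⟨(i : ℕ) - 4, by omega⟩) ⊗ₜ[F] (1 : PolyPart F)

/-- The elements `ν₁,…,ν₄` (0-based: `nu 0 = ν₁ = ∂₆∂₇∂₈`, etc.). -/
def nu : Fin 4 → AA F
  | 0 => dv F 5 * dv F 6 * dv F 7
  | 1 => -(dv F 4 * dv F 6 * dv F 7)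
  | 2 => dv F 4 * dv F 5 * dv F 7
  | 3 => -(dv F 4 * dv F 5 * dv F 6)

/-- `ν` extended to all eight indices by `ν₅ = ⋯ = ν₈ = 0`. -/
def nu8 (i : Fin 8) : AA F :=
  if h : (i : ℕ) < 4 then nu F ⟨i, h⟩ else 0

/-- the embedding `{1,…,4} → {1,…,8}` , `i ↦ i` (even indices). -/
def ei (i : Fin 4) : Fin 8 := ⟨(i : ℕ), by omega⟩
/-- the embedding `{1,…,4} → {1,…,8}` , `i ↦ i + 4` (odd indices). -/
def oi (i : Fin 4) : Fin 8 := ⟨(i : ℕ) + 4, by omega⟩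

/-- The free `A`-module `R = A ⊗ F⁸` on the basis `a₁,…,a₈`, realized as
`Fin 8 → A` with basis the coordinate vectors. -/
abbrev MM := Fin 8 → AA F

/-- The basis elements `a₁,…,a₈` (0-based). -/
def av (i : Fin 8) : MM F := Pi.single i (1 : AA F)

/-- `B_{∂∂} = Σ_{i=1}^4 ∂ᵢ∂_{i+4}`. -/
def Bdd : AA F := ∑ i : Fin 4, dv F (ei i) * dv F (oi i)

/-- `C_{∂a} = Σ_{i=1}^4 (∂ᵢ a_{i+4} + ∂_{i+4} aᵢ)`. -/
def Cda : MM F := ∑ i : Fin 4, (dv F (ei i) • av F (oi i) + dv F (oi i) • av F (ei i))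

/-- `B_{νa} = Σ_{i=1}^4 νᵢ a_{i+4}`. -/
def Bnua : MM F := ∑ i : Fin 4, nu F i • av F (oi i)

/-- `αᵢ = ∂ᵢ B_{∂∂} C_{∂a} − 2 νᵢ C_{∂a} + ∂ᵢ B_{νa}` for `i = 1,…,8` (0-based). -/
def alph (i : Fin 8) : MM F :=
  (dv F i * Bdd F) • Cda F - (2 : ℤ) • (nu8 F i • Cda F) + dv F i • Bnua F

end
/-- For `i,j ∈ {5,6,7,8}` with `i ≠ j`: `∂ᵢ αⱼ = −∂ⱼ αᵢ`. -/
theorem stmt2 (F : Type) [Field F] [CharZero F] :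
    ∀ i j : Fin 4, i ≠ j →
      dv F (oi i) • alph F (oi j) = -(dv F (oi j) • alph F (oi i)) := by
  intro i j hij
  have h0 : ∀ k : Fin 4, nu8 F (oi k) = 0 := by
    intro k; simp [nu8, oi]
  have hac : dv F (oi i) * dv F (oi j) = -(dv F (oi j) * dv F (oi i)) := by
    have := ExteriorAlgebra.ι_add_mul_swap (R := F) (M := Fin 4 → F)
      (Pi.single i (1 : F)) (Pi.single j (1 : F))
    have h2 : gen F i * gen F j = -(gen F j * gen F i) := by
      rw [eq_neg_iff_add_eq_zero]; exact this
    simp [dv, oi, Algebra.TensorProduct.tmul_mul_tmul, h2, TensorProduct.neg_tmul]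
  have key : ∀ x : MM F, dv F (oi i) • dv F (oi j) • x = -(dv F (oi j) • dv F (oi i) • x) := by
    intro x; funext k
    simp only [Pi.smul_apply, Pi.neg_apply, smul_eq_mul]
    rw [← mul_assoc, ← mul_assoc, hac]
    exact neg_mul (α := AA F) _ _
  have hz : ∀ x : MM F, (0 : AA F) • x = 0 := by intro x; funext k; simp
  have hm : ∀ a b : AA F, ∀ x : MM F, (a * b) • x = a • b • x := by
    intro a b x; funext k; simp [mul_assoc]
  simp only [alph, h0, hz, zero_smul, smul_zero, sub_zero, smul_add, hm, mul_smul, key, neg_add]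
end

section
/- With the same notation, for all i ∈ {5,6,7,8} and j ∈ {5,6,7,8} with i ≠ j: ∂ᵢ α_{j−4} = ∂_{j−4} αᵢ (i.e., the action of an odd generator on the element α indexed by an even index equals the action of the corresponding even generator on the element α indexed by the odd index). -/
open scoped TensorProduct
open MvPolynomial

set_option synthInstance.maxHeartbeats 1000000
set_option maxHeartbeats 1000000

noncomputable section

variable (F : Type) [Field F] [CharZero F]

section Aux
set_option linter.unusedSectionVars false
variable (F : Type) [Field F] [CharZero F]

lemma gen_sq (a : Fin 4) : gen F a * gen F a = 0 :=
  ExteriorAlgebra.ι_sq_zero _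

lemma gen_swap (a b : Fin 4) : gen F a * gen F b = -(gen F b * gen F a) := by
  unfold gen
  exact eq_neg_of_add_eq_zero_left (ExteriorAlgebra.ι_add_mul_swap _ _)

lemma h1 (a : Fin 4) (x : ExtPart F) : gen F a * (gen F a * x) = 0 := by
  rw [← mul_assoc, gen_sq, zero_mul]

lemma h2 (a b : Fin 4) (x : ExtPart F) :
    gen F a * (gen F b * x) = -(gen F b * (gen F a * x)) := by
  rw [← mul_assoc, gen_swap, ← mul_assoc, neg_mul]

lemma quad_zero (a b c d : Fin 4) (h : a = b ∨ a = c ∨ a = d) :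
    gen F a * (gen F b * (gen F c * gen F d)) = 0 := by
  rcases h with h | h | h
  · subst h; exact h1 F a _
  · subst h
    rw [h2, h1, mul_zero, neg_zero]
  · subst h
    rw [h2, h2 F a c, gen_sq]
    simp

lemma dv_oi (i : Fin 4) : dv F (oi i) = gen F i ⊗ₜ[F] (1 : PolyPart F) := by
  have : ¬ ((oi i : ℕ) < 4) := by simp [oi]
  have h4 : (⟨(oi i : ℕ) - 4, by omega⟩ : Fin 4) = i := by ext; simp [oi]
  rw [dv, dif_neg this, h4]

lemma mul_neg_zero' {A : Type*} [Ring A] (x y : A) (h : x * y = 0) : x * -y = 0 := by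
  rw [mul_neg, h, neg_zero]

lemma key (i j : Fin 4) (hij : i ≠ j) : dv F (oi i) * nu F j = 0 := by
  have hmem : ∀ a b c d : Fin 4, (a = b ∨ a = c ∨ a = d) →
      (gen F a ⊗ₜ[F] (1 : PolyPart F)) *
        ((gen F b ⊗ₜ[F] (1 : PolyPart F)) * (gen F c ⊗ₜ[F] (1 : PolyPart F)) *
          (gen F d ⊗ₜ[F] (1 : PolyPart F))) = 0 := by
    intro a b c d h
    simp only [Algebra.TensorProduct.tmul_mul_tmul, mul_one, one_mul, mul_assoc]
    rw [quad_zero F a b c d h, TensorProduct.zero_tmul]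
  fin_cases i <;> fin_cases j <;>
    first
      | exact absurd rfl hij
      | · rw [dv_oi]
          simp only [nu, dv_oi, show ((5:Fin 8)) = oi 1 from rfl,
            show ((6:Fin 8)) = oi 2 from rfl, show ((7:Fin 8)) = oi 3 from rfl,
            show ((4:Fin 8)) = oi 0 from rfl, mul_neg, neg_eq_zero]
          first
            | (apply hmem; decide)
            | (apply mul_neg_zero'; apply hmem; decide)

lemma abstract {A M : Type*} [Ring A] [AddCommGroup M] [Module A M]
    (x y B n : A) (C D : M) (hz : x * n = 0) (hc : x * y = y * x) :
    x • ((y * B) • C - (2:ℤ) • (n • C) + y • D)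
      = y • ((x * B) • C - (2:ℤ) • ((0:A) • C) + x • D) := by
  rw [zero_smul, smul_zero, sub_zero, smul_add, smul_add, smul_sub,
    smul_comm x (2:ℤ), smul_smul x n, hz, zero_smul, smul_zero, sub_zero,
    smul_smul, smul_smul, smul_smul, smul_smul, ← mul_assoc, ← mul_assoc, hc]

theorem stmt3' (i j : Fin 4) (hij : i ≠ j) :
    dv F (oi i) • alph F (ei j) = dv F (ei j) • alph F (oi i) := by
  have hEj : nu8 F (ei j) = nu F j := by
    rw [nu8, dif_pos (show ((ei j : ℕ) < 4) from j.isLt)]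
    exact congrArg (nu F) (Fin.ext rfl)
  have hOi : nu8 F (oi i) = 0 := by
    rw [nu8, dif_neg (by simp [oi])]
  have hz : dv F (oi i) * nu F j = 0 := key F i j hij
  have hc : dv F (oi i) * dv F (ei j) = dv F (ei j) * dv F (oi i) := by
    have hj : ((ei j : ℕ) < 4) := j.isLt
    rw [dv_oi, dv, dif_pos hj, Algebra.TensorProduct.tmul_mul_tmul,
      Algebra.TensorProduct.tmul_mul_tmul, one_mul, mul_one, one_mul, mul_one]
  rw [alph, alph, hEj, hOi]
  exact abstract (A := AA F) (M := MM F) (dv F (oi i)) (dv F (ei j)) (Bdd F)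
    (nu F j) (Cda F) (Bnua F) hz hc

end Aux

end
/-- For `i,j ∈ {5,6,7,8}` with `i ≠ j`:
`∂ᵢ α_{j−4} = ∂_{j−4} αᵢ`. -/
theorem stmt3 (F : Type) [Field F] [CharZero F] :
    ∀ i j : Fin 4, i ≠ j →
      dv F (oi i) • alph F (ei j) = dv F (ei j) • alph F (oi i) := by
  intro i j hij
  exact stmt3' F i j hij
end

section
/- The map Φ from the Lie superalgebra E(4,4) to W(4,4) defined in the paper is a morphism of Lie superalgebras on degree-(−1) against arbitrary elements; in particular, for all r,s ∈ {1,2,3,4} and all formal power series f: Φ([∂_{x_r}, f(X)∂_{x_s}]) = [Φ(∂_{x_r}), Φ(f(X)∂_{x_s})] and Φ([∂_{x_r}, f(X)dx_s]) = [Φ(∂_{x_r}), Φ(f(X)dx_s)], using that [∂_{y_r}, β₁(s,i)] = [∂_{y_r}, β₂(i)] = [∂_{y_r}, β₃(i,l)] = [∂_{y_r}, γ₁(s,j)] = [∂_{y_r}, γ₂(s,j,l)] = 0 for all even indices r. -/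
open scoped TensorProduct

set_option synthInstance.maxHeartbeats 1000000
set_option maxHeartbeats 1000000

noncomputable section

/-- The Levi-Civita symbol `ε_{abcd}` on `{1,2,3,4}` (0-based). -/
def lc (a b c d : Fin 4) : ℤ :=
  (((b : ℤ) - a) * ((c : ℤ) - a) * ((c : ℤ) - b) *
    ((d : ℤ) - a) * ((d : ℤ) - b) * ((d : ℤ) - c)) / 12

variable (F : Type) [Field F] [CharZero F]

/-- The odd part of `𝒪 = F[[y₁,…,y₄]] ⊗ Λ(y₅,…,y₈)`. -/
abbrev OddPart := ExteriorAlgebra F (Fin 4 → F)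

variable (R : Type) [CommRing R] [Algebra F R]

/-- `𝒪 = (even part) ⊗ Λ(y₅,…,y₈)`, where the even part `R` is an arbitrary
commutative `F`-algebra with four commuting derivations `∂_{y₁},…,∂_{y₄}`
(e.g. `R = F[[y₁,…,y₄]]` with its partial derivatives). -/
abbrev OO := OddPart F ⊗[F] R

/-- Left multiplication by the odd variable `y_{i+5}` (0-based). -/
def mo (i : Fin 4) : Module.End F (OO F R) :=
  LinearMap.mulLeft F ((ExteriorAlgebra.ι F (Pi.single i (1 : F))) ⊗ₜ[F] (1 : R))

/-- The odd derivation `∂_{y_{i+5}}` (0-based), given by contraction with the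
`i`-th coordinate function in the exterior factor. -/
def co (i : Fin 4) : Module.End F (OO F R) :=
  LinearMap.rTensor R
    (CliffordAlgebra.contractLeft (LinearMap.proj i : Module.Dual F (Fin 4 → F)))

variable (Dv : Fin 4 → Derivation F R R)

/-- The even derivation `∂_{y_{k+1}}` (0-based). -/
def pe (k : Fin 4) : Module.End F (OO F R) :=
  LinearMap.lTensor (OddPart F) (Dv k : R →ₗ[F] R)

/-- Multiplication by `f(Y) ∈ R`. -/
def mf (f : R) : Module.End F (OO F R) :=
  LinearMap.mulLeft F ((1 : OddPart F) ⊗ₜ[F] f)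

/-- `β₁(r,i)`. -/
def beta1 (r i : Fin 4) : Module.End F (OO F R) :=
  if r = i then -(mo F R r * co F R r) + (2⁻¹ : F) • ∑ l : Fin 4, mo F R l * co F R l
  else -(mo F R r * co F R i)

/-- `β₂(i) = −½(y_{j+4}y_{h+4}∂_{y_k} + y_{h+4}y_{k+4}∂_{y_j} + y_{k+4}y_{j+4}∂_{y_h})`,
`ε(ijhk) = 1`; written via the Levi-Civita symbol (each cyclic term appears
twice in the antisymmetrized sum, whence the normalization `−¼`). -/
def beta2 (i : Fin 4) : Module.End F (OO F R) :=
  -(4⁻¹ : F) • ∑ j : Fin 4, ∑ h : Fin 4, ∑ k : Fin 4,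
    lc i j h k • (mo F R j * mo F R h * pe F R Dv k)

/-- `β₃(i,l) = ½ y_{j+4}y_{h+4}y_{k+4}∂_{y_{l+4}}`, `ε(ijhk) = 1` (via the
Levi-Civita symbol; the six orderings contribute equally, whence `1/12`). -/
def beta3 (i l : Fin 4) : Module.End F (OO F R) :=
  (12⁻¹ : F) • ∑ j : Fin 4, ∑ h : Fin 4, ∑ k : Fin 4,
    lc i j h k • (mo F R j * mo F R h * mo F R k * co F R l)

/-- `γ₁(i,j) = y_{h+4}∂_{y_k} − y_{k+4}∂_{y_h}`, `ε(ijhk) = 1` (via the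
Levi-Civita symbol). -/
def gamma1 (i j : Fin 4) : Module.End F (OO F R) :=
  ∑ h : Fin 4, ∑ k : Fin 4, lc i j h k • (mo F R h * pe F R Dv k)

/-- `γ₂(i,j,l) = −y_{h+4}y_{k+4}∂_{y_{l+4}}`, `ε(ijhk) = 1`. -/
def gamma2 (i j l : Fin 4) : Module.End F (OO F R) :=
  -(2⁻¹ : F) • ∑ h : Fin 4, ∑ k : Fin 4,
    lc i j h k • (mo F R h * mo F R k * co F R l)

/-- `Φ(f(X)∂_{x_r})`, the image in `W(4,4)` of the even vector field
`f(X)∂_{x_r}` of `E(4,4)`. -/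
def PhiV (f : R) (r : Fin 4) : Module.End F (OO F R) :=
  mf F R f * pe F R Dv r
    + ∑ i : Fin 4, mf F R (Dv i f) * beta1 F R r i
    + ∑ i : Fin 4, mf F R (Dv r (Dv i f)) * beta2 F R Dv i
    + ∑ i : Fin 4, ∑ l : Fin 4, mf F R (Dv r (Dv i (Dv l f))) * beta3 F R i l

/-- `Φ(f(X)dx_i)`, the image in `W(4,4)` of the odd element `f(X)dxᵢ` of
`E(4,4)`. -/
def PhiF (f : R) (i : Fin 4) : Module.End F (OO F R) :=
  mf F R f * co F R i
    + ∑ j : Fin 4, mf F R (Dv j f) * gamma1 F R Dv i j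
    + ∑ j : Fin 4, ∑ l : Fin 4, mf F R (Dv j (Dv l f)) * gamma2 F R i j l

set_option linter.unusedSectionVars false in
lemma pe_mf (r : Fin 4) (c : R) :
    pe F R Dv r * mf F R c = mf F R c * pe F R Dv r + mf F R (Dv r c) := by
  apply TensorProduct.ext'
  intro w g
  simp [pe, mf, Module.End.mul_apply, Algebra.TensorProduct.tmul_mul_tmul,
    Derivation.leibniz, smul_eq_mul, TensorProduct.tmul_add, mul_comm]

set_option linter.unusedSectionVars false in
lemma pe_comm_mo (r i : Fin 4) : Commute (pe F R Dv r) (mo F R i) := by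
  apply TensorProduct.ext'
  intro w g
  simp [pe, mo, Module.End.mul_apply, Algebra.TensorProduct.tmul_mul_tmul]

set_option linter.unusedSectionVars false in
lemma pe_comm_co (r i : Fin 4) : Commute (pe F R Dv r) (co F R i) := by
  show _ = _
  rw [Module.End.mul_eq_comp, Module.End.mul_eq_comp]
  unfold pe co
  rw [LinearMap.lTensor_comp_rTensor, LinearMap.rTensor_comp_lTensor]

set_option linter.unusedSectionVars false in
lemma pe_comm_pe (h : ∀ r k : Fin 4, ∀ f : R, Dv r (Dv k f) = Dv k (Dv r f))
    (r k : Fin 4) : Commute (pe F R Dv r) (pe F R Dv k) := by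
  apply TensorProduct.ext'
  intro w g
  simp [pe, Module.End.mul_apply, h r k]

set_option linter.unusedSectionVars false in
lemma pe_comm_beta1 (r s i : Fin 4) : Commute (pe F R Dv r) (beta1 F R s i) := by
  unfold beta1
  split
  · exact (((pe_comm_mo F R Dv r s).mul_right (pe_comm_co F R Dv r s)).neg_right).add_right
      ((Commute.sum_right _ _ _ fun l _ =>
        (pe_comm_mo F R Dv r l).mul_right (pe_comm_co F R Dv r l)).smul_right _)
  · exact ((pe_comm_mo F R Dv r s).mul_right (pe_comm_co F R Dv r i)).neg_right

set_option linter.unusedSectionVars false in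
lemma pe_comm_beta2 (h : ∀ r k : Fin 4, ∀ f : R, Dv r (Dv k f) = Dv k (Dv r f))
    (r i : Fin 4) : Commute (pe F R Dv r) (beta2 F R Dv i) := by
  unfold beta2
  exact (Commute.sum_right _ _ _ fun j _ => Commute.sum_right _ _ _ fun a _ =>
    Commute.sum_right _ _ _ fun k _ =>
      (((pe_comm_mo F R Dv r j).mul_right (pe_comm_mo F R Dv r a)).mul_right
        (pe_comm_pe F R Dv h r k)).smul_right _).smul_right _

set_option linter.unusedSectionVars false in
lemma pe_comm_beta3 (r i l : Fin 4) : Commute (pe F R Dv r) (beta3 F R i l) := by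
  unfold beta3
  exact (Commute.sum_right _ _ _ fun j _ => Commute.sum_right _ _ _ fun a _ =>
    Commute.sum_right _ _ _ fun k _ =>
      ((((pe_comm_mo F R Dv r j).mul_right (pe_comm_mo F R Dv r a)).mul_right
        (pe_comm_mo F R Dv r k)).mul_right (pe_comm_co F R Dv r l)).smul_right _).smul_right _

set_option linter.unusedSectionVars false in
lemma pe_comm_gamma1 (h : ∀ r k : Fin 4, ∀ f : R, Dv r (Dv k f) = Dv k (Dv r f))
    (r i j : Fin 4) : Commute (pe F R Dv r) (gamma1 F R Dv i j) := by
  unfold gamma1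
  exact Commute.sum_right _ _ _ fun a _ => Commute.sum_right _ _ _ fun k _ =>
    ((pe_comm_mo F R Dv r a).mul_right (pe_comm_pe F R Dv h r k)).smul_right _

set_option linter.unusedSectionVars false in
lemma pe_comm_gamma2 (r i j l : Fin 4) : Commute (pe F R Dv r) (gamma2 F R i j l) := by
  unfold gamma2
  exact (Commute.sum_right _ _ _ fun a _ => Commute.sum_right _ _ _ fun k _ =>
    (((pe_comm_mo F R Dv r a).mul_right (pe_comm_mo F R Dv r k)).mul_right
      (pe_comm_co F R Dv r l)).smul_right _).smul_right _

set_option linter.unusedSectionVars false in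
lemma bracket_mf_mul (r : Fin 4) (c : R) (B : Module.End F (OO F R))
    (hB : Commute (pe F R Dv r) B) :
    ⁅pe F R Dv r, mf F R c * B⁆ = mf F R (Dv r c) * B := by
  have h := pe_mf F R Dv r c
  rw [Ring.lie_def, ← mul_assoc, h, add_mul, mul_assoc, hB.eq, ← mul_assoc]
  abel

set_option linter.unusedSectionVars false in
lemma lie_sum' {ι : Type*} (s : Finset ι) (a : Module.End F (OO F R))
    (g : ι → Module.End F (OO F R)) : ⁅a, ∑ i ∈ s, g i⁆ = ∑ i ∈ s, ⁅a, g i⁆ := by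
  simp [Ring.lie_def, Finset.mul_sum, Finset.sum_mul, Finset.sum_sub_distrib]

set_option linter.unusedSectionVars false in
lemma lie_add' (a b c : Module.End F (OO F R)) : ⁅a, b + c⁆ = ⁅a, b⁆ + ⁅a, c⁆ := by
  rw [Ring.lie_def, Ring.lie_def, Ring.lie_def, mul_add, add_mul]
  abel

/-- `Φ` is a morphism on degree `−1` against arbitrary
elements: since `[∂_{x_r}, f(X)∂_{x_s}] = (∂_{x_r}f)∂_{x_s}` and
`[∂_{x_r}, f(X)dx_s] = (∂_{x_r}f)dx_s`, and `Φ(∂_{x_r}) = ∂_{y_r}`, this says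
`Φ((∂_{x_r}f)∂_{x_s}) = [∂_{y_r}, Φ(f∂_{x_s})]` and
`Φ((∂_{x_r}f)dx_s) = [∂_{y_r}, Φ(f dx_s)]` (plain commutators, as `∂_{y_r}` is
even); the constant-coefficient operators `β₁, β₂, β₃, γ₁, γ₂` commute with
`∂_{y_r}`. -/
theorem stmt15 (hDcomm : ∀ r k : Fin 4, ∀ f : R, Dv r (Dv k f) = Dv k (Dv r f)) :
    ∀ (f : R) (r s : Fin 4),
      PhiV F R Dv (Dv r f) s = ⁅pe F R Dv r, PhiV F R Dv f s⁆ ∧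
      PhiF F R Dv (Dv r f) s = ⁅pe F R Dv r, PhiF F R Dv f s⁆ := by
  intro f r s
  constructor
  · rw [PhiV, PhiV, lie_add' F R, lie_add' F R, lie_add' F R, lie_sum' F R, lie_sum' F R, lie_sum' F R]
    rw [bracket_mf_mul F R Dv r f _ (pe_comm_pe F R Dv hDcomm r s)]
    congr 1
    · congr 1
      · congr 1
        refine Finset.sum_congr rfl fun i _ => ?_
        rw [bracket_mf_mul F R Dv r _ _ (pe_comm_beta1 F R Dv r s i), hDcomm]
      · refine Finset.sum_congr rfl fun i _ => ?_
        rw [bracket_mf_mul F R Dv r _ _ (pe_comm_beta2 F R Dv hDcomm r i),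
          hDcomm i r f, hDcomm s r]
    · refine Finset.sum_congr rfl fun i _ => ?_
      rw [lie_sum' F R]
      refine Finset.sum_congr rfl fun l _ => ?_
      rw [bracket_mf_mul F R Dv r _ _ (pe_comm_beta3 F R Dv r i l),
        hDcomm l r f, hDcomm i r, hDcomm s r]
  · rw [PhiF, PhiF, lie_add' F R, lie_add' F R, lie_sum' F R, lie_sum' F R]
    rw [bracket_mf_mul F R Dv r f _ (pe_comm_co F R Dv r s)]
    congr 1
    · congr 1
      refine Finset.sum_congr rfl fun j _ => ?_
      rw [bracket_mf_mul F R Dv r _ _ (pe_comm_gamma1 F R Dv hDcomm r s j), hDcomm]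
    · refine Finset.sum_congr rfl fun j _ => ?_
      rw [lie_sum' F R]
      refine Finset.sum_congr rfl fun l _ => ?_
      rw [bracket_mf_mul F R Dv r _ _ (pe_comm_gamma2 F R Dv r s j l),
        hDcomm l r f, hDcomm j r]

end
end
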